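/- Let n, α, k ∈ ℕ, let U = {1,…,n}, and for each t ∈ {1,…,α} let F_t be a family of pairwise disjoint subsets of U, each of size at least 2. Let (G, col) be the α-edge-colored graph associated with this Partitioned Hitting Set instance. Then there exists a set S ⊆ U with |S| ≤ k such that S ∩ f ≠ ∅ for every t ∈ {1,…,α} and every f ∈ F_t, if and only if (G, col) has a simultaneous feedback edge set of size at most k. -/

import Mathlib

/-- An ordered pair `(i, j)` of elements of the set `f` is *consecutive* if either
`i < j` and `f` contains no element strictly between `i` and `j`, or `i = max f` and
`j = min f`. -/
def consecPair {n : ℕ} (f : Finset (Fin n)) (i j : Fin n) : Prop :=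
  (i ∈ f ∧ j ∈ f ∧ i < j ∧ ∀ l ∈ f, ¬(i < l ∧ l < j)) ∨
  (i ∈ f ∧ j ∈ f ∧ (∀ l ∈ f, l ≤ i) ∧ (∀ l ∈ f, j ≤ l))

/-- The underlying graph `G` of the `α`-edge-colored graph associated with a
Partitioned Hitting Set instance `F : Fin α → Finset (Finset (Fin n))`.  The vertices
`v i`, `w i` are `Sum.inl (i, false)`, `Sum.inl (i, true)`, and `s_{i,j,t}` is
`Sum.inr (i, j, t)` (isolated unless `(i, j)` is `(t,f)`-consecutive for some
`f ∈ F t`). -/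
def phsGraph (n α : ℕ) (F : Fin α → Finset (Finset (Fin n))) :
    SimpleGraph ((Fin n × Bool) ⊕ (Fin n × Fin n × Fin α)) :=
  SimpleGraph.fromRel fun a b =>
    (∃ i : Fin n, a = Sum.inl (i, false) ∧ b = Sum.inl (i, true)) ∨
    (∃ (i j : Fin n) (t : Fin α), (∃ f ∈ F t, consecPair f i j) ∧
        a = Sum.inl (i, true) ∧ b = Sum.inr (i, j, t)) ∨
    (∃ (i j : Fin n) (t : Fin α), (∃ f ∈ F t, consecPair f i j) ∧
        a = Sum.inr (i, j, t) ∧ b = Sum.inl (j, false))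

/-- The color-`t` graph `G_t` of the associated `α`-edge-colored graph: the edge
`{v i, w i}` has color set `{t : i belongs to some member of F t}`, and the edges
`{w i, s_{i,j,t}}`, `{s_{i,j,t}, v j}` have color set `{t}`. -/
def phsColorGraph (n α : ℕ) (F : Fin α → Finset (Finset (Fin n))) (t : Fin α) :
    SimpleGraph ((Fin n × Bool) ⊕ (Fin n × Fin n × Fin α)) :=
  SimpleGraph.fromRel fun a b =>
    (∃ i : Fin n, (∃ f ∈ F t, i ∈ f) ∧
        a = Sum.inl (i, false) ∧ b = Sum.inl (i, true)) ∨
    (∃ i j : Fin n, (∃ f ∈ F t, consecPair f i j) ∧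
        a = Sum.inl (i, true) ∧ b = Sum.inr (i, j, t)) ∨
    (∃ i j : Fin n, (∃ f ∈ F t, consecPair f i j) ∧
        a = Sum.inr (i, j, t) ∧ b = Sum.inl (j, false))

/-!
For each colour `t`, the graph `G_t` is a disjoint union of cycles
`v_i w_i s_{i,j,t} v_j w_j …`, one for every `f ∈ F t`, whose vertices all carry indices in `f`.

A hitting set `S` yields the feedback edge set `{v_x w_x : x ∈ S}`. Each cycle loses an edge and
becomes a path; numbering every path from the cut edge onwards gives a potential for which every
vertex has at most one neighbour that is not above it, which rules out cycles, since the top vertex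
of a cycle has two neighbours below it.

Conversely, sending every edge of a feedback edge set to the index of one of its endpoints gives a
hitting set of no larger size: if it missed some `f`, the whole cycle of `f` would survive.
-/

open SimpleGraph

theorem SimpleGraph.isAcyclic_of_subsingleton_lower {V β : Type*} [LinearOrder β]
    {G : SimpleGraph V} (φ : V → β) (h : ∀ v, {u | G.Adj v u ∧ φ u ≤ φ v}.Subsingleton) :
    G.IsAcyclic := by
  classical
  intro v c hc
  obtain ⟨m, hm, hmax⟩ := c.support.toFinset.exists_max_image φ ⟨v, by simp⟩
  rw [List.mem_toFinset] at hm
  set c' := c.rotate m hm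
  have hc' : c'.IsCycle := hc.rotate hm
  have hle : ∀ i, φ (c'.getVert i) ≤ φ m := fun i =>
    hmax _ (List.mem_toFinset.mpr ((c.mem_support_rotate_iff m hm).mp (c'.getVert_mem_support i)))
  exact hc'.snd_ne_penultimate <| h m ⟨c'.adj_snd hc'.not_nil, hle 1⟩
    ⟨(c'.adj_penultimate hc'.not_nil).symm, hle _⟩

namespace consecPair

variable {n : ℕ} {f : Finset (Fin n)} {i i' j j' : Fin n}

theorem left_mem (h : consecPair f i j) : i ∈ f := by
  rcases h with ⟨h, _⟩ | ⟨h, _⟩ <;> exact h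

theorem right_mem (h : consecPair f i j) : j ∈ f := by
  rcases h with ⟨_, h, _⟩ | ⟨_, h, _⟩ <;> exact h

theorem left_unique (h : consecPair f i j) (h' : consecPair f i' j) : i = i' := by
  rcases h with ⟨hi, -, hij, hb⟩ | ⟨hi, -, hmax, hmin⟩ <;>
    rcases h' with ⟨hi', -, hij', hb'⟩ | ⟨hi', -, hmax', hmin'⟩
  · rcases lt_trichotomy i i' with hlt | heq | hlt
    · exact (hb i' hi' ⟨hlt, hij'⟩).elim
    · exact heq
    · exact (hb' i hi ⟨hlt, hij⟩).elim
  · exact absurd (hmin' i hi) (not_le.mpr hij)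
  · exact absurd (hmin i' hi') (not_le.mpr hij')
  · exact le_antisymm (hmax' i hi) (hmax i' hi')

theorem right_unique (h : consecPair f i j) (h' : consecPair f i j') : j = j' := by
  rcases h with ⟨-, hj, hij, hb⟩ | ⟨-, hj, hmax, hmin⟩ <;>
    rcases h' with ⟨-, hj', hij', hb'⟩ | ⟨-, hj', hmax', hmin'⟩
  · rcases lt_trichotomy j j' with hlt | heq | hlt
    · exact (hb' j hj ⟨hij, hlt⟩).elim
    · exact heq
    · exact (hb j' hj' ⟨hij', hlt⟩).elim
  · exact absurd (hmax' j hj) (not_le.mpr hij)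
  · exact absurd (hmax j' hj') (not_le.mpr hij')
  · exact le_antisymm (hmin j' hj') (hmin' j hj)

end consecPair

theorem exists_consecPair {n : ℕ} {f : Finset (Fin n)} {i : Fin n} (hi : i ∈ f) :
    ∃ j, consecPair f i j ∧ (i < j ∨ j = f.min' ⟨i, hi⟩) := by
  by_cases hsucc : (f.filter (i < ·)).Nonempty
  · obtain ⟨hj, hij⟩ := Finset.mem_filter.mp ((f.filter (i < ·)).min'_mem hsucc)
    refine ⟨_, Or.inl ⟨hi, hj, hij, fun l hl ⟨hil, hlj⟩ => ?_⟩, Or.inl hij⟩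
    exact (Finset.min'_le _ l (Finset.mem_filter.mpr ⟨hl, hil⟩)).not_gt hlj
  · simp only [Finset.not_nonempty_iff_eq_empty, Finset.filter_eq_empty_iff, not_lt] at hsucc
    exact ⟨_, Or.inr ⟨hi, f.min'_mem _, hsucc, fun l hl => f.min'_le l hl⟩, Or.inr rfl⟩

namespace PHS

variable {n α : ℕ}

abbrev Vertex (n α : ℕ) := (Fin n × Bool) ⊕ (Fin n × Fin n × Fin α)

section RotatedRank

variable {P : Finset (Finset (Fin n))} {S f : Finset (Fin n)} {i j : Fin n}

/-- For pairwise disjoint `P` and `f ∈ P` meeting `S`, ordering `f` by `rotRank P S` lists it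
cyclically, starting right after the largest element of `S ∩ f`. -/
def rotRank (P : Finset (Finset (Fin n))) (S : Finset (Fin n)) (i : Fin n) : ℕ :=
  if ∃ f ∈ P, i ∈ f ∧ ∃ y ∈ S, y ∈ f ∧ i ≤ y then n + i else i

theorem rotRank_of_mem (hP : (P : Set (Finset (Fin n))).PairwiseDisjoint id) (hf : f ∈ P)
    (hi : i ∈ f) : rotRank P S i = if ∃ y ∈ S, y ∈ f ∧ i ≤ y then n + i else i := by
  refine if_congr ⟨?_, fun h => ⟨f, hf, hi, h⟩⟩ rfl rfl
  rintro ⟨g, hg, hig, hy⟩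
  rwa [hP.elim_finset hf hg i hi hig]

theorem rotRank_lt_rotRank (hP : (P : Set (Finset (Fin n))).PairwiseDisjoint id) (hf : f ∈ P)
    (hhit : ∃ y ∈ S, y ∈ f) (hij : consecPair f i j) (hiS : i ∉ S) :
    rotRank P S i < rotRank P S j := by
  rw [rotRank_of_mem hP hf hij.left_mem, rotRank_of_mem hP hf hij.right_mem]
  rcases hij with ⟨-, -, hij, hbetween⟩ | ⟨-, -, hmax, hmin⟩
  · have hsplit : (∃ y ∈ S, y ∈ f ∧ i ≤ y) ↔ (∃ y ∈ S, y ∈ f ∧ j ≤ y) := by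
      refine ⟨fun ⟨y, hyS, hyf, hiy⟩ => ⟨y, hyS, hyf, ?_⟩,
        fun ⟨y, hyS, hyf, hjy⟩ => ⟨y, hyS, hyf, hij.le.trans hjy⟩⟩
      by_contra! hyj
      exact hbetween y hyf ⟨hiy.lt_of_ne (fun h => hiS (h ▸ hyS)), hyj⟩
    simp only [hsplit]
    split_ifs <;> omega
  · have hnot : ¬∃ y ∈ S, y ∈ f ∧ i ≤ y := fun ⟨y, hyS, hyf, hiy⟩ =>
      hiS (le_antisymm hiy (hmax y hyf) ▸ hyS)
    obtain ⟨y, hyS, hyf⟩ := hhit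
    rw [if_neg hnot, if_pos ⟨y, hyS, hyf, hmin y hyf⟩]
    omega

end RotatedRank

/-- Numbers the vertices of each path `…, s_{i,j,t}, v_j, w_j, s_{j,k,t}, …` that is left of the
cycle of `f` after deleting the hit edges. -/
def potential (P : Finset (Finset (Fin n))) (S : Finset (Fin n)) : Vertex n α → ℕ
  | .inr (_, j, _) => 3 * rotRank P S j
  | .inl (j, false) => 3 * rotRank P S j + 1
  | .inl (j, true) => 3 * rotRank P S j + 2

def hitEdges (S : Finset (Fin n)) : Finset (Sym2 (Vertex n α)) :=
  S.image fun x => s(.inl (x, false), .inl (x, true))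

variable {F : Fin α → Finset (Finset (Fin n))} {t : Fin α} {S : Finset (Fin n)}

theorem lower_neighbor_cases (hP : (F t : Set (Finset (Fin n))).PairwiseDisjoint id)
    (hS : ∀ f ∈ F t, ∃ x ∈ S, x ∈ f) {a b : Vertex n α}
    (hab : ((phsColorGraph n α F t).deleteEdges ↑(hitEdges (α := α) S)).Adj a b)
    (hle : potential (F t) S b ≤ potential (F t) S a) :
    (∃ i j, (∃ f ∈ F t, consecPair f i j) ∧ a = .inl (j, false) ∧ b = .inr (i, j, t)) ∨
    (∃ i, i ∉ S ∧ a = .inl (i, true) ∧ b = .inl (i, false)) ∨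
    (∃ i j, i ∈ S ∧ (∃ f ∈ F t, consecPair f i j) ∧ a = .inl (i, true) ∧ b = .inr (i, j, t)) ∨
    (∃ i j, a = .inr (i, j, t) ∧ b = .inl (i, true)) := by
  rw [deleteEdges_adj] at hab
  obtain ⟨⟨-, hrel | hrel⟩, hhit⟩ := hab <;>
    rcases hrel with ⟨i, -, rfl, rfl⟩ | ⟨i, j, hc, rfl, rfl⟩ | ⟨i, j, hc, rfl, rfl⟩
  · simp only [potential] at hle; omega
  · by_cases hiS : i ∈ S
    · exact Or.inr (Or.inr (Or.inl ⟨i, j, hiS, hc, rfl, rfl⟩))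
    · obtain ⟨f, hf, hc⟩ := hc
      have := rotRank_lt_rotRank hP hf (hS f hf) hc hiS
      simp only [potential] at hle; omega
  · simp only [potential] at hle; omega
  · refine Or.inr (Or.inl ⟨i, fun hiS => hhit ?_, rfl, rfl⟩)
    exact Finset.mem_image.mpr ⟨i, hiS, Sym2.eq_swap⟩
  · exact Or.inr (Or.inr (Or.inr ⟨i, j, rfl, rfl⟩))
  · exact Or.inl ⟨i, j, hc, rfl, rfl⟩

theorem isAcyclic_deleteEdges_hitEdges (hP : (F t : Set (Finset (Fin n))).PairwiseDisjoint id)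
    (hS : ∀ f ∈ F t, ∃ x ∈ S, x ∈ f) :
    ((phsColorGraph n α F t).deleteEdges ↑(hitEdges (α := α) S)).IsAcyclic := by
  refine isAcyclic_of_subsingleton_lower (potential (F t) S) fun a b₁ ⟨h₁, l₁⟩ b₂ ⟨h₂, l₂⟩ => ?_
  rcases lower_neighbor_cases hP hS h₁ l₁ with
    ⟨i₁, j₁, ⟨f₁, hf₁, hc₁⟩, rfl, rfl⟩ | ⟨i₁, hi₁, rfl, rfl⟩ |
      ⟨i₁, j₁, hi₁, ⟨f₁, hf₁, hc₁⟩, rfl, rfl⟩ | ⟨i₁, j₁, rfl, rfl⟩ <;>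
  rcases lower_neighbor_cases hP hS h₂ l₂ with
    ⟨i₂, j₂, ⟨f₂, hf₂, hc₂⟩, he, rfl⟩ | ⟨i₂, hi₂, he, rfl⟩ |
      ⟨i₂, j₂, hi₂, ⟨f₂, hf₂, hc₂⟩, he, rfl⟩ | ⟨i₂, j₂, he, rfl⟩ <;>
  simp only [Sum.inl.injEq, Sum.inr.injEq, Prod.mk.injEq, reduceCtorEq, Bool.false_eq_true,
    Bool.true_eq_false, and_false, and_true] at he
  · subst he
    obtain rfl := hP.elim_finset hf₁ hf₂ _ hc₁.right_mem hc₂.right_mem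
    rw [hc₁.left_unique hc₂]
  · rw [he]
  · exact (hi₁ (he ▸ hi₂)).elim
  · exact (hi₂ (he ▸ hi₁)).elim
  · subst he
    obtain rfl := hP.elim_finset hf₁ hf₂ _ hc₁.left_mem hc₂.left_mem
    rw [hc₁.right_unique hc₂]
  · obtain ⟨rfl, rfl⟩ := he
    rfl

theorem hitEdges_subset_edgeSet (F : Fin α → Finset (Finset (Fin n))) (S : Finset (Fin n)) :
    ↑(hitEdges (α := α) S) ⊆ (phsGraph n α F).edgeSet := by
  intro e he
  obtain ⟨x, -, rfl⟩ := Finset.mem_image.mp he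
  exact ⟨by simp, .inl (.inl ⟨x, rfl, rfl⟩)⟩

theorem not_isAcyclic_of_cycle {H : SimpleGraph (Vertex n α)} {f : Finset (Fin n)}
    (hf : f.Nonempty) (t : Fin α)
    (hvw : ∀ i ∈ f, H.Adj (.inl (i, false)) (.inl (i, true)))
    (hws : ∀ i j, consecPair f i j → H.Adj (.inl (i, true)) (.inr (i, j, t)))
    (hsv : ∀ i j, consecPair f i j → H.Adj (.inr (i, j, t)) (.inl (j, false))) :
    ¬H.IsAcyclic := by
  set m := f.min' hf
  set H' := H.deleteEdges {s(.inl (m, false), .inl (m, true))}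
  have hadj {a b} (h : H.Adj a b) (hne : s(a, b) ≠ s(.inl (m, false), .inl (m, true))) :
      H'.Adj a b :=
    (deleteEdges_adj ..).mpr ⟨h, hne⟩
  have hstep (c j) (hcj : consecPair f c j) : H'.Reachable (.inl (c, true)) (.inl (j, false)) :=
    (hadj (hws c j hcj) (by simp)).reachable.trans (hadj (hsv c j hcj) (by simp)).reachable
  have hreach : ∀ c ∈ f, H'.Reachable (.inl (c, true)) (.inl (m, false)) := by
    intro c
    induction c using WellFoundedGT.induction with
    | _ c ih =>
      intro hc
      obtain ⟨j, hcj, hj | rfl⟩ := exists_consecPair hc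
      · have hjm : j ≠ m := ((f.min'_le c hc).trans_lt hj).ne'
        exact (hstep c j hcj).trans <|
          (hadj (hvw j hcj.right_mem) (by simp [hjm])).reachable.trans (ih j hj hcj.right_mem)
      · exact hstep c _ hcj
  intro hacyc
  exact isAcyclic_iff_forall_adj_isBridge.mp hacyc (hvw m (f.min'_mem hf))
    (hreach m (f.min'_mem hf)).symm

def vertexIndex : Vertex n α → Fin n
  | .inl (i, _) => i
  | .inr (i, _, _) => i

noncomputable def edgeIndex (e : Sym2 (Vertex n α)) : Fin n :=
  vertexIndex e.out.1

theorem not_isAcyclic_deleteEdges_of_forall_edgeIndex_notMem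
    {S' : Finset (Sym2 (Vertex n α))} {f : Finset (Fin n)} (hf : f ∈ F t) (hne : f.Nonempty)
    (hmiss : ∀ e ∈ S', edgeIndex e ∉ f) :
    ¬((phsColorGraph n α F t).deleteEdges ↑S').IsAcyclic := by
  have hkeep {a b : Vertex n α} (ha : vertexIndex a ∈ f) (hb : vertexIndex b ∈ f) :
      s(a, b) ∉ S' := fun he => hmiss _ he <| by
    rcases Sym2.mem_iff.mp (s(a, b)).out_fst_mem with h | h <;> rw [edgeIndex, h] <;> assumption
  refine not_isAcyclic_of_cycle hne t (fun i hi => ?_) (fun i j hij => ?_) (fun i j hij => ?_) <;>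
    rw [deleteEdges_adj]
  · exact ⟨⟨by simp, .inl (.inl ⟨i, ⟨f, hf, hi⟩, rfl, rfl⟩)⟩, hkeep hi hi⟩
  · exact ⟨⟨by simp, .inl (.inr (.inl ⟨i, j, ⟨f, hf, hij⟩, rfl, rfl⟩))⟩,
      hkeep hij.left_mem hij.left_mem⟩
  · exact ⟨⟨by simp, .inl (.inr (.inr ⟨i, j, ⟨f, hf, hij⟩, rfl, rfl⟩))⟩,
      hkeep hij.left_mem hij.right_mem⟩

end PHS

open PHS in
/-- Let `U = Fin n` and for each `t` let `F t` be a family of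
pairwise disjoint subsets of `U`, each of size at least `2`, and let `(G, col)` be the
`α`-edge-colored graph associated with this Partitioned Hitting Set instance.  Then
there is `S ⊆ U` with `|S| ≤ k` hitting every `f ∈ F t` for every `t` iff `(G, col)`
has a simultaneous feedback edge set of size at most `k`. -/
theorem stmt_10 (n α k : ℕ) (F : Fin α → Finset (Finset (Fin n)))
    (hcard : ∀ t : Fin α, ∀ f ∈ F t, 2 ≤ f.card)
    (hdisj : ∀ t : Fin α, ∀ f ∈ F t, ∀ g ∈ F t, f ≠ g → Disjoint f g) :
    (∃ S : Finset (Fin n), S.card ≤ k ∧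
        ∀ t : Fin α, ∀ f ∈ F t, ∃ x ∈ S, x ∈ f) ↔
    (∃ S : Finset (Sym2 ((Fin n × Bool) ⊕ (Fin n × Fin n × Fin α))),
      S.card ≤ k ∧
      (S : Set (Sym2 ((Fin n × Bool) ⊕ (Fin n × Fin n × Fin α)))) ⊆
        (phsGraph n α F).edgeSet ∧
      ∀ t : Fin α,
        ((phsColorGraph n α F t).deleteEdges
          (S : Set (Sym2 ((Fin n × Bool) ⊕ (Fin n × Fin n × Fin α))))).IsAcyclic) := by
  constructor
  · rintro ⟨S, hSk, hS⟩
    exact ⟨hitEdges S, Finset.card_image_le.trans hSk, hitEdges_subset_edgeSet F S,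
      fun t => isAcyclic_deleteEdges_hitEdges (hdisj t) (hS t)⟩
  · rintro ⟨S', hS'k, -, hacyc⟩
    refine ⟨S'.image edgeIndex, Finset.card_image_le.trans hS'k, fun t f hf => ?_⟩
    by_contra! hmiss
    have hne : f.Nonempty := Finset.card_pos.mp (by linarith [hcard t f hf])
    exact not_isAcyclic_deleteEdges_of_forall_edgeIndex_notMem hf hne
      (fun e he => hmiss _ (Finset.mem_image_of_mem _ he)) (hacyc t)
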